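/- Fix n ≥ 1 and c ∈ ℝ, and define G : ℝⁿ → ℝ by G(y₁,…,yₙ) = 2y₁² + Σ_{i=1}^{n−1}(y_{i+1} − y_i)² + 2(c − yₙ)², with unique global minimizer y*. Then for every y ∈ ℝⁿ, ‖∇G(y)‖₂² ≥ (4/n²)·(G(y) − G(y*)). -/

import Mathlib

/-- The quadratic function
`G(y₁,…,yₙ) = 2y₁² + Σ_{i=1}^{n-1}(y_{i+1} - y_i)² + 2(c - yₙ)²`, for `n+1` coordinates. -/
noncomputable def Gfun (n : ℕ) (c : ℝ) (y : EuclideanSpace ℝ (Fin (n + 1))) : ℝ :=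
  2 * (y 0) ^ 2 + (∑ i : Fin n, (y i.succ - y i.castSucc) ^ 2)
    + 2 * (c - y (Fin.last n)) ^ 2

noncomputable def Lmap (n : ℕ) (c : ℝ) (y : EuclideanSpace ℝ (Fin (n + 1))) :
    EuclideanSpace ℝ (Fin (n + 1)) →L[ℝ] ℝ :=
  (4 * y 0) • EuclideanSpace.proj (0 : Fin (n+1))
    + ∑ i : Fin n, (2 * (y i.succ - y i.castSucc)) •
        (EuclideanSpace.proj (i.succ : Fin (n+1)) - EuclideanSpace.proj (i.castSucc : Fin (n+1)))
    + (-(4 * (c - y (Fin.last n)))) • EuclideanSpace.proj (Fin.last n)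

lemma Lmap_apply (n : ℕ) (c : ℝ) (y w : EuclideanSpace ℝ (Fin (n + 1))) :
    Lmap n c y w = 4 * y 0 * w 0
      + (∑ i : Fin n, 2 * (y i.succ - y i.castSucc) * (w i.succ - w i.castSucc))
      - 4 * (c - y (Fin.last n)) * w (Fin.last n) := by
  simp [Lmap, mul_sub]
  ring

lemma hasF (n : ℕ) (c : ℝ) (y : EuclideanSpace ℝ (Fin (n + 1))) :
    HasFDerivAt (Gfun n c) (Lmap n c y) y := by
  have hp : ∀ j : Fin (n+1), HasFDerivAt (fun z : EuclideanSpace ℝ (Fin (n+1)) => (z j : ℝ))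
      (EuclideanSpace.proj (𝕜 := ℝ) j) y := fun j => by
    exact (EuclideanSpace.proj (𝕜 := ℝ) j).hasFDerivAt (x := y)
  have h1 : HasFDerivAt (fun z : EuclideanSpace ℝ (Fin (n+1)) => 2 * ((z 0 : ℝ) * z 0))
      ((4 * y 0) • EuclideanSpace.proj (𝕜 := ℝ) (0 : Fin (n+1))) y := by
    have := ((hp 0).mul (hp 0)).const_mul (2:ℝ)
    refine this.congr_fderiv ?_
    ext w
    simp
    ring
  have h2 : HasFDerivAt (fun z : EuclideanSpace ℝ (Fin (n+1)) =>
      ∑ i : Fin n, ((z i.succ - z i.castSucc) * (z i.succ - z i.castSucc) : ℝ))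
      (∑ i : Fin n, (2 * (y i.succ - y i.castSucc)) •
        (EuclideanSpace.proj (𝕜 := ℝ) (i.succ : Fin (n+1)) - EuclideanSpace.proj (𝕜 := ℝ) (i.castSucc : Fin (n+1)))) y := by
    refine HasFDerivAt.fun_sum fun i _ => ?_
    have := ((hp i.succ).sub (hp i.castSucc)).mul ((hp i.succ).sub (hp i.castSucc))
    refine this.congr_fderiv ?_
    ext w
    simp
    ring
  have h3 : HasFDerivAt (fun z : EuclideanSpace ℝ (Fin (n+1)) => 2 * ((c - z (Fin.last n)) * (c - z (Fin.last n)) : ℝ))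
      ((-(4 * (c - y (Fin.last n)))) • EuclideanSpace.proj (𝕜 := ℝ) (Fin.last n)) y := by
    have := (((hasFDerivAt_const c y).sub (hp (Fin.last n))).mul
      ((hasFDerivAt_const c y).sub (hp (Fin.last n)))).const_mul (2:ℝ)
    refine this.congr_fderiv ?_
    ext w
    simp
    ring
  have h := (h1.add h2).add h3
  exact h.congr_of_eventuallyEq (Filter.Eventually.of_forall fun z => by
    simp only [Gfun, pow_two, Pi.add_apply])

open RealInnerProductSpace in
lemma inner_gradient (n : ℕ) (c : ℝ) (y w : EuclideanSpace ℝ (Fin (n + 1))) :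
    ⟪gradient (Gfun n c) y, w⟫ = Lmap n c y w := by
  rw [gradient, (hasF n c y).fderiv, InnerProductSpace.toDual_symm_apply]

lemma key (n : ℕ) (f : ℕ → ℝ) :
    ∑ k ∈ Finset.range (n+1), f k ^ 2 ≤
      ((n:ℝ)+1)^2 * (2*(f 0)^2 + (∑ i ∈ Finset.range n, (f (i+1) - f i)^2) + 2*(f n)^2) := by
  set d : ℕ → ℝ := fun i => if i = 0 then f 0 else f i - f (i-1) with hd
  have htel : ∀ k, ∑ i ∈ Finset.range (k+1), d i = f k := by
    intro k
    induction k with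
    | zero => simp [hd]
    | succ m ih =>
        rw [Finset.sum_range_succ, ih]
        simp [hd]
  set S : ℝ := ∑ i ∈ Finset.range (n+1), d i ^ 2 with hS
  have hSnn : ∀ i, (0:ℝ) ≤ d i ^ 2 := fun i => sq_nonneg _
  have hk : ∀ k ∈ Finset.range (n+1), f k ^ 2 ≤ ((n:ℝ)+1) * S := by
    intro k hk
    rw [Finset.mem_range] at hk
    have h1 : f k ^ 2 ≤ ((k:ℝ)+1) * ∑ i ∈ Finset.range (k+1), d i ^ 2 := by
      have := sq_sum_le_card_mul_sum_sq (s := Finset.range (k+1)) (f := d)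
      rw [Finset.card_range] at this
      rw [← htel k]
      exact_mod_cast this
    have h2 : ∑ i ∈ Finset.range (k+1), d i ^ 2 ≤ S := by
      apply Finset.sum_le_sum_of_subset_of_nonneg
      · exact Finset.range_subset_range.2 (by omega)
      · intro i _ _; exact sq_nonneg _
    calc f k ^ 2 ≤ ((k:ℝ)+1) * ∑ i ∈ Finset.range (k+1), d i ^ 2 := h1
      _ ≤ ((n:ℝ)+1) * S := by
          apply mul_le_mul _ h2 (Finset.sum_nonneg fun i _ => sq_nonneg _) (by positivity)
          have hkn : (k:ℝ) ≤ n := Nat.cast_le.2 (Nat.lt_succ_iff.mp hk)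
          linarith
  have hsum : ∑ k ∈ Finset.range (n+1), f k ^ 2 ≤ ((n:ℝ)+1) * ((n:ℝ)+1) * S := by
    calc ∑ k ∈ Finset.range (n+1), f k ^ 2 ≤ ∑ _k ∈ Finset.range (n+1), ((n:ℝ)+1) * S :=
          Finset.sum_le_sum hk
      _ = ((n:ℝ)+1) * ((n:ℝ)+1) * S := by
          rw [Finset.sum_const, Finset.card_range]
          ring
  have hSQ : S = f 0 ^ 2 + ∑ i ∈ Finset.range n, (f (i+1) - f i)^2 := by
    rw [hS, Finset.sum_range_succ']
    have : ∀ i ∈ Finset.range n, d (i+1) ^ 2 = (f (i+1) - f i)^2 := by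
      intro i _
      simp [hd]
    rw [Finset.sum_congr rfl this]
    simp [hd, add_comm]
  have hQ : S ≤ 2*(f 0)^2 + (∑ i ∈ Finset.range n, (f (i+1) - f i)^2) + 2*(f n)^2 := by
    rw [hSQ]
    nlinarith [sq_nonneg (f 0), sq_nonneg (f n)]
  calc ∑ k ∈ Finset.range (n+1), f k ^ 2 ≤ ((n:ℝ)+1) * ((n:ℝ)+1) * S := hsum
    _ ≤ ((n:ℝ)+1)^2 * (2*(f 0)^2 + (∑ i ∈ Finset.range n, (f (i+1) - f i)^2) + 2*(f n)^2) := by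
        rw [sq]
        apply mul_le_mul_of_nonneg_left hQ (by positivity)

open RealInnerProductSpace in
theorem stmt7' (n : ℕ) (c : ℝ) (ys : EuclideanSpace ℝ (Fin (n + 1)))
    (hmin : ∀ z, Gfun n c ys ≤ Gfun n c z) :
    ∀ y : EuclideanSpace ℝ (Fin (n + 1)),
      ‖gradient (Gfun n c) y‖ ^ 2 ≥ (4 / ((n : ℝ) + 1) ^ 2) * (Gfun n c y - Gfun n c ys) := by
  intro y
  set g := gradient (Gfun n c) y with hg
  set z : EuclideanSpace ℝ (Fin (n + 1)) := y - ys with hzdef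
  have hzap : ∀ j, z j = y j - ys j := fun j => rfl
  set Qz : ℝ := 2 * (z 0) ^ 2 + (∑ i : Fin n, (z i.succ - z i.castSucc) ^ 2)
      + 2 * (z (Fin.last n)) ^ 2 with hQz
  -- gradient at minimizer kills Lmap ys
  have h0 : Lmap n c ys z = 0 := by
    have hloc : IsLocalMin (Gfun n c) ys := Filter.Eventually.of_forall hmin
    have hfd : fderiv ℝ (Gfun n c) ys = Lmap n c ys := (hasF n c ys).fderiv
    rw [← hfd, hloc.fderiv_eq_zero]
    rfl
  -- two algebraic identities
  have hsum1 : (∑ i : Fin n, 2 * (y i.succ - y i.castSucc) * (z i.succ - z i.castSucc))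
      + (∑ i : Fin n, 2 * (ys i.succ - ys i.castSucc) * (z i.succ - z i.castSucc))
      = 2 * (∑ i : Fin n, (y i.succ - y i.castSucc)^2)
        - 2 * (∑ i : Fin n, (ys i.succ - ys i.castSucc)^2) := by
    rw [← Finset.sum_add_distrib, Finset.mul_sum, Finset.mul_sum, ← Finset.sum_sub_distrib]
    refine Finset.sum_congr rfl fun i _ => ?_
    simp only [hzap]
    ring
  have hsum2 : (∑ i : Fin n, 2 * (y i.succ - y i.castSucc) * (z i.succ - z i.castSucc))
      - (∑ i : Fin n, 2 * (ys i.succ - ys i.castSucc) * (z i.succ - z i.castSucc))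
      = 2 * ∑ i : Fin n, (z i.succ - z i.castSucc)^2 := by
    rw [← Finset.sum_sub_distrib, Finset.mul_sum]
    refine Finset.sum_congr rfl fun i _ => ?_
    simp only [hzap]
    ring
  have halg : Lmap n c y z + Lmap n c ys z = 2 * (Gfun n c y - Gfun n c ys) := by
    rw [Lmap_apply, Lmap_apply]
    simp only [Gfun]
    have h1 := hsum1
    simp only [hzap] at h1 ⊢
    linear_combination h1
  have h2Q : Lmap n c y z - Lmap n c ys z = 2 * Qz := by
    rw [Lmap_apply, Lmap_apply, hQz]
    have h2 := hsum2
    simp only [hzap] at h2 ⊢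
    linear_combination h2
  have hLy : Lmap n c y z = 2 * Qz := by linarith
  have hdiff : Gfun n c y - Gfun n c ys = Qz := by linarith
  have hinner : ⟪g, z⟫ = 2 * Qz := by rw [hg, inner_gradient, hLy]
  -- strong convexity bound
  have hznorm : ‖z‖ ^ 2 = ∑ j : Fin (n+1), (z j) ^ 2 := by
    rw [EuclideanSpace.norm_eq, Real.sq_sqrt (Finset.sum_nonneg fun j _ => sq_nonneg _)]
    simp [PiLp.inner_apply, RCLike.inner_apply, sq]
  have hz2 : ‖z‖ ^ 2 ≤ ((n:ℝ)+1)^2 * Qz := by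
    set f : ℕ → ℝ := fun k => if h : k < n + 1 then z ⟨k, h⟩ else 0 with hf
    have hf0 : f 0 = z 0 := by simp [hf]
    have hfn : f n = z (Fin.last n) := by
      rw [hf]; simp only [dif_pos (Nat.lt_succ_self n)]; rfl
    have hsq : ∑ j : Fin (n+1), (z j) ^ 2 = ∑ k ∈ Finset.range (n+1), f k ^ 2 := by
      rw [← Fin.sum_univ_eq_sum_range (fun k => f k ^ 2) (n+1)]
      refine Finset.sum_congr rfl fun j _ => ?_
      rw [hf]
      simp only [dif_pos j.isLt]
    have hdiffs : ∑ i : Fin n, (z i.succ - z i.castSucc) ^ 2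
        = ∑ i ∈ Finset.range n, (f (i+1) - f i)^2 := by
      rw [← Fin.sum_univ_eq_sum_range (fun k => (f (k+1) - f k)^2) n]
      refine Finset.sum_congr rfl fun i _ => ?_
      have h1 : (i:ℕ) + 1 < n + 1 := by omega
      have h2 : (i:ℕ) < n + 1 := by omega
      rw [hf]
      simp only [dif_pos h1, dif_pos h2]
      rfl
    calc ‖z‖ ^ 2 = ∑ k ∈ Finset.range (n+1), f k ^ 2 := by rw [hznorm, hsq]
      _ ≤ ((n:ℝ)+1)^2 * (2*(f 0)^2 + (∑ i ∈ Finset.range n, (f (i+1) - f i)^2) + 2*(f n)^2) :=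
          key n f
      _ = ((n:ℝ)+1)^2 * Qz := by rw [hQz, hdiffs, ← hf0, ← hfn]
  -- Cauchy-Schwarz and conclusion
  have hCS : ⟪g, z⟫ ≤ ‖g‖ * ‖z‖ := real_inner_le_norm g z
  have hQnn : 0 ≤ Qz := by
    have := hmin y
    linarith [hdiff]
  rw [hdiff, ge_iff_le, div_mul_eq_mul_div, div_le_iff₀ (by positivity : (0:ℝ) < ((n:ℝ)+1)^2)]
  rcases eq_or_lt_of_le hQnn with hQ0 | hQpos
  · rw [← hQ0, mul_zero]
    positivity
  · have hgz : 2 * Qz ≤ ‖g‖ * ‖z‖ := by linarith [hinner, hCS]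
    have hsq4 : 4 * Qz^2 ≤ ‖g‖^2 * ‖z‖^2 := by
      have h := mul_self_le_mul_self (by linarith : (0:ℝ) ≤ 2 * Qz) hgz
      calc 4 * Qz^2 = (2*Qz) * (2*Qz) := by ring
        _ ≤ (‖g‖ * ‖z‖) * (‖g‖ * ‖z‖) := h
        _ = ‖g‖^2 * ‖z‖^2 := by ring
    have hfin : 4 * Qz^2 ≤ ‖g‖^2 * (((n:ℝ)+1)^2 * Qz) :=
      hsq4.trans (mul_le_mul_of_nonneg_left hz2 (sq_nonneg _))
    refine le_of_mul_le_mul_right ?_ hQpos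
    calc 4 * Qz * Qz = 4 * Qz^2 := by ring
      _ ≤ ‖g‖^2 * (((n:ℝ)+1)^2 * Qz) := hfin
      _ = ‖g‖^2 * ((n:ℝ)+1)^2 * Qz := by ring

/-- If `y*` is the unique global minimizer of `G`, then for every `y`,
`‖∇G(y)‖₂² ≥ (4/n²)·(G(y) - G(y*))`. -/
theorem stmt7 (n : ℕ) (c : ℝ) (ys : EuclideanSpace ℝ (Fin (n + 1)))
    (hmin : ∀ z, Gfun n c ys ≤ Gfun n c z) :
    ∀ y : EuclideanSpace ℝ (Fin (n + 1)),
      ‖gradient (Gfun n c) y‖ ^ 2 ≥ (4 / ((n : ℝ) + 1) ^ 2) * (Gfun n c y - Gfun n c ys) := by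
  exact stmt7' n c ys hmin
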